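/- arXiv:1008.1468 — 2 statements merged into one kernel-verified Lean document; each statement's English description precedes it below -/
import Mathlib

section
/- For points P = (X,a) and Q = (Y,b) in the upper half-plane with X ≠ Y lying on a semicircle centered on the real axis, the hyperbolic distance between W_τ(P) and W_τ(Q) tends to 0 as τ → ∞. -/
/-- Inverse hyperbolic cosine. -/
noncomputable def arcosh (x : ℝ) : ℝ := Real.log (x + Real.sqrt (x ^ 2 - 1))

/-- Hyperbolic distance in the upper half-plane. -/
noncomputable def hdist (p q : ℝ × ℝ) : ℝ :=
  arcosh (1 + ((p.1 - q.1) ^ 2 + (p.2 - q.2) ^ 2) / (2 * p.2 * q.2))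

/-- The Wildberger transformation on the upper half-plane. -/
noncomputable def W (τ : ℝ) (p : ℝ × ℝ) : ℝ × ℝ :=
  (p.1, Real.sqrt (p.2 ^ 2 + τ ^ 2))

theorem wildberger_shrinks_arcs_to_zero (X a Y b : ℝ)
    (ha : 0 < a) (hb : 0 < b) (hXY : X ≠ Y)
    (hgeo : ∃ c : ℝ, (X - c) ^ 2 + a ^ 2 = (Y - c) ^ 2 + b ^ 2) :
    Filter.Tendsto (fun τ : ℝ => hdist (W τ (X, a)) (W τ (Y, b)))
      Filter.atTop (nhds 0) := by
  -- sqrt(c² + τ²) → ∞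
  have hT : ∀ c : ℝ, Filter.Tendsto (fun τ : ℝ => Real.sqrt (c ^ 2 + τ ^ 2))
      Filter.atTop Filter.atTop := by
    intro c
    apply Filter.tendsto_atTop_mono (f := fun τ : ℝ => τ) _ Filter.tendsto_id
    intro τ
    calc τ ≤ |τ| := le_abs_self τ
      _ = Real.sqrt (τ ^ 2) := (Real.sqrt_sq_eq_abs τ).symm
      _ ≤ Real.sqrt (c ^ 2 + τ ^ 2) := Real.sqrt_le_sqrt (by nlinarith)
  set s := fun τ : ℝ => Real.sqrt (a ^ 2 + τ ^ 2) with hs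
  set t := fun τ : ℝ => Real.sqrt (b ^ 2 + τ ^ 2) with ht
  have hspos : ∀ τ, 0 < s τ := fun τ => Real.sqrt_pos.2 (by positivity)
  have htpos : ∀ τ, 0 < t τ := fun τ => Real.sqrt_pos.2 (by positivity)
  -- denominator 2 s t → ∞
  have hden : Filter.Tendsto (fun τ => 2 * s τ * t τ) Filter.atTop Filter.atTop := by
    have := ((hT a).atTop_mul_atTop₀ (hT b)).const_mul_atTop (show (0:ℝ) < 2 by norm_num)
    simpa [mul_assoc] using this
  -- s τ - t τ → 0
  have hdiff : Filter.Tendsto (fun τ => s τ - t τ) Filter.atTop (nhds 0) := by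
    have hsum : Filter.Tendsto (fun τ => s τ + t τ) Filter.atTop Filter.atTop :=
      Filter.Tendsto.atTop_add_atTop (hT a) (hT b)
    have heq : ∀ τ, s τ - t τ = (a ^ 2 - b ^ 2) / (s τ + t τ) := by
      intro τ
      have h1 : s τ ^ 2 = a ^ 2 + τ ^ 2 := Real.sq_sqrt (by positivity)
      have h2 : t τ ^ 2 = b ^ 2 + τ ^ 2 := Real.sq_sqrt (by positivity)
      have hne : s τ + t τ ≠ 0 := by positivity
      field_simp
      nlinarith [h1, h2]
    simp only [heq]
    exact Filter.Tendsto.div_atTop tendsto_const_nhds hsum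
  -- numerator tends to (X-Y)^2
  have hnum : Filter.Tendsto (fun τ => (X - Y) ^ 2 + (s τ - t τ) ^ 2)
      Filter.atTop (nhds ((X - Y) ^ 2 + 0)) := by
    exact Filter.Tendsto.const_add _ (by simpa using hdiff.pow 2)
  have hE : Filter.Tendsto
      (fun τ => ((X - Y) ^ 2 + (s τ - t τ) ^ 2) / (2 * s τ * t τ))
      Filter.atTop (nhds 0) :=
    Filter.Tendsto.div_atTop hnum hden
  have harg : Filter.Tendsto
      (fun τ => 1 + ((X - Y) ^ 2 + (s τ - t τ) ^ 2) / (2 * s τ * t τ))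
      Filter.atTop (nhds 1) := by
    simpa using hE.const_add 1
  -- arcosh continuous at 1, arcosh 1 = 0
  have hcont : ContinuousAt arcosh 1 := by
    unfold arcosh
    apply ContinuousAt.comp (g := Real.log)
    · apply Real.continuousAt_log
      norm_num
    · fun_prop
  have h0 : arcosh 1 = 0 := by
    unfold arcosh
    norm_num
  have := hcont.tendsto.comp harg
  rw [h0] at this
  exact this
end

section
/- In the upper half-plane, for fixed X ≠ Y and heights a_τ = sqrt(a₀²+τ²), b_τ = sqrt(b₀²+τ²) with u² + b₀² = a₀² and u = |X−Y| > 0, the hyperbolic length of the geodesic arc from (X, a_τ) to (Y, b_τ) is strictly decreasing in τ for τ > 0. -/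
lemma arcosh_strictMonoOn : StrictMonoOn arcosh (Set.Ici 1) := by
  intro x hx y hy hxy
  simp only [Set.mem_Ici] at hx hy
  unfold arcosh
  apply Real.log_lt_log
  · have := Real.sqrt_nonneg (x ^ 2 - 1)
    linarith
  · have h1 : x ^ 2 - 1 < y ^ 2 - 1 := by nlinarith
    have := Real.sqrt_lt_sqrt (by nlinarith) h1
    linarith

theorem wildberger_arc_length_strict_anti (X Y a₀ b₀ u : ℝ)
    (hb : 0 < b₀) (hu : u = |X - Y|) (hupos : 0 < u)
    (hgeo : u ^ 2 + b₀ ^ 2 = a₀ ^ 2) :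
    StrictAntiOn
      (fun τ : ℝ =>
        hdist (X, Real.sqrt (a₀ ^ 2 + τ ^ 2)) (Y, Real.sqrt (b₀ ^ 2 + τ ^ 2)))
      (Set.Ioi (0 : ℝ)) := by
  have ha0 : 0 < a₀ ^ 2 := by nlinarith
  have hXY : (X - Y) ^ 2 = u ^ 2 := by rw [hu, sq_abs]
  have key : ∀ τ : ℝ,
      hdist (X, Real.sqrt (a₀ ^ 2 + τ ^ 2)) (Y, Real.sqrt (b₀ ^ 2 + τ ^ 2))
        = arcosh (Real.sqrt (a₀ ^ 2 + τ ^ 2) / Real.sqrt (b₀ ^ 2 + τ ^ 2)) := by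
    intro τ
    set A := Real.sqrt (a₀ ^ 2 + τ ^ 2) with hA
    set B := Real.sqrt (b₀ ^ 2 + τ ^ 2) with hB
    have hBpos : 0 < B := Real.sqrt_pos.2 (by positivity)
    have hApos : 0 < A := Real.sqrt_pos.2 (by positivity)
    have hA2 : A ^ 2 = a₀ ^ 2 + τ ^ 2 := Real.sq_sqrt (by positivity)
    have hB2 : B ^ 2 = b₀ ^ 2 + τ ^ 2 := Real.sq_sqrt (by positivity)
    unfold hdist
    congr 1
    have hXY2 : (X - Y) ^ 2 = A ^ 2 - B ^ 2 := by
      rw [hXY, hA2, hB2]; linarith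
    rw [hXY2]
    field_simp
    ring
  intro s hs t ht hst
  simp only [Set.mem_Ioi] at hs ht
  simp only [key]
  have hAs : 0 < Real.sqrt (a₀ ^ 2 + s ^ 2) := Real.sqrt_pos.2 (by positivity)
  have hBs : 0 < Real.sqrt (b₀ ^ 2 + s ^ 2) := Real.sqrt_pos.2 (by positivity)
  have hAt : 0 < Real.sqrt (a₀ ^ 2 + t ^ 2) := Real.sqrt_pos.2 (by positivity)
  have hBt : 0 < Real.sqrt (b₀ ^ 2 + t ^ 2) := Real.sqrt_pos.2 (by positivity)
  have hab : b₀ ^ 2 < a₀ ^ 2 := by nlinarith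
  have hge : ∀ τ : ℝ, (1 : ℝ) ≤ Real.sqrt (a₀ ^ 2 + τ ^ 2) / Real.sqrt (b₀ ^ 2 + τ ^ 2) := by
    intro τ
    have hBpos : 0 < Real.sqrt (b₀ ^ 2 + τ ^ 2) := Real.sqrt_pos.2 (by positivity)
    rw [le_div_iff₀ hBpos, one_mul]
    exact Real.sqrt_le_sqrt (by linarith)
  have hlt : Real.sqrt (a₀ ^ 2 + t ^ 2) / Real.sqrt (b₀ ^ 2 + t ^ 2)
      < Real.sqrt (a₀ ^ 2 + s ^ 2) / Real.sqrt (b₀ ^ 2 + s ^ 2) := by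
    rw [div_lt_div_iff₀ hBt hBs]
    have h : Real.sqrt ((a₀ ^ 2 + t ^ 2) * (b₀ ^ 2 + s ^ 2))
        < Real.sqrt ((a₀ ^ 2 + s ^ 2) * (b₀ ^ 2 + t ^ 2)) := by
      apply Real.sqrt_lt_sqrt (by positivity)
      have hts : s ^ 2 < t ^ 2 := by nlinarith
      nlinarith [mul_pos (sub_pos.2 hab) (sub_pos.2 hts)]
    rwa [Real.sqrt_mul (by positivity), Real.sqrt_mul (by positivity)] at h
  exact arcosh_strictMonoOn (Set.mem_Ici.2 (hge t)) (Set.mem_Ici.2 (hge s)) hlt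
end
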